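/- In the extended model with αa + βp > 0 and g strictly increasing, the variance gap G(k) = Δ·B(k)³/(B(k)+P)² is strictly increasing in contact intensity k. -/

import Mathlib

open Set

theorem strictMonoOn_mul_pow_three_div_add_sq {Δ P : ℝ} (hΔ : 0 < Δ) (hP : 0 ≤ P) :
    StrictMonoOn (fun x : ℝ => Δ * x ^ 3 / (x + P) ^ 2) (Ioi 0) := by
  intro x (hx : 0 < x) y (hy : 0 < y) hxy
  have hcross : x ^ 3 * (y + P) ^ 2 < y ^ 3 * (x + P) ^ 2 := by
    have hfactor : y ^ 3 * (x + P) ^ 2 - x ^ 3 * (y + P) ^ 2 =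
        (y - x) * (x ^ 2 * y ^ 2 + 2 * P * x * y * (x + y) + P ^ 2 * (x ^ 2 + x * y + y ^ 2)) := by
      ring
    have hpos : 0 < (y - x) *
        (x ^ 2 * y ^ 2 + 2 * P * x * y * (x + y) + P ^ 2 * (x ^ 2 + x * y + y ^ 2)) :=
      mul_pos (sub_pos.mpr hxy) (by positivity)
    linarith
  rw [div_lt_div_iff₀ (by positivity) (by positivity), mul_assoc, mul_assoc]
  exact mul_lt_mul_of_pos_left hcross hΔ

theorem contact_increases_gap_nonroutine_general (Δ P α β a p : ℝ) (g : ℝ → ℝ)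
    (hΔ : 0 < Δ) (hP : 0 < P) (hap : 0 < α * a + β * p)
    (hg : StrictMonoOn g (Set.Ici 0))
    (hgpos : ∀ k, 0 ≤ k → 0 < g k) :
    StrictMonoOn
      (fun k : ℝ => Δ * (1 + (α * a + β * p) * g k) ^ 3 /
        ((1 + (α * a + β * p) * g k) + P) ^ 2)
      (Set.Ici 0) := by
  set c := α * a + β * p
  have hB : StrictMonoOn (fun k => 1 + c * g k) (Ici 0) := fun k₁ hk₁ k₂ hk₂ hk => by
    have := mul_lt_mul_of_pos_left (hg hk₁ hk₂ hk) hap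
    dsimp only
    linarith
  have hBpos : MapsTo (fun k => 1 + c * g k) (Ici 0) (Ioi 0) := fun k hk => by
    have := mul_pos hap (hgpos k hk)
    show 0 < 1 + c * g k
    linarith
  exact (strictMonoOn_mul_pow_three_div_add_sq hΔ hP.le).comp hB hBpos

/-- In non-routine jobs (αa+βp > 0) with g strictly increasing, the variance
gap G(k) = Δ·B(k)³/(B(k)+P)² is strictly increasing in contact intensity k. -/
theorem contact_increases_gap_nonroutine (Δ P α β a p : ℝ) (g : ℝ → ℝ)
    (hΔ : 0 < Δ) (hP : 0 < P) (hα : 0 < α) (hβ : 0 < β)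
    (ha : 0 ≤ a) (hp : 0 ≤ p) (hap : 0 < α * a + β * p)
    (hg : StrictMonoOn g (Set.Ici 0)) (hg0 : g 0 = 1)
    (hgpos : ∀ k, 0 ≤ k → 0 < g k) :
    StrictMonoOn
      (fun k : ℝ => Δ * (1 + (α * a + β * p) * g k) ^ 3 /
        ((1 + (α * a + β * p) * g k) + P) ^ 2)
      (Set.Ici 0) :=
  contact_increases_gap_nonroutine_general Δ P α β a p g hΔ hP hap hg hgpos
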